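/- Let (S, μ) be a measure space with μ σ-finite, let p₀, p₁ : S → ℝ be nonnegative measurable probability densities with respect to μ, let π₀, π₁ ≥ 0 with π₀ + π₁ = 1, let P_e = ∫_S min(π₀ p₀(s), π₁ p₁(s)) dμ(s) and ρ = ∫_S √(p₀(s) p₁(s)) dμ(s). Then P_e ≥ 1/2 − (1/2)·√(1 − 4 π₀ π₁ ρ²). -/

import Mathlib

open MeasureTheory

/-!
Pointwise, `min a b * max a b = a * b` and `min a b + max a b = a + b`. Taking `a = π₀ p₀` and
`b = π₁ p₁`, Cauchy–Schwarz for `√min` and `√max` gives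
`π₀ π₁ ρ² ≤ (∫ min) (∫ max) = P_e (1 - P_e)`, and solving this quadratic inequality for `P_e`
gives the bound.
-/

section
variable {α : Type*} [MeasurableSpace α] {μ : Measure α}

theorem sq_integral_sqrt_mul_le {f g : α → ℝ} (hf : 0 ≤ᵐ[μ] f) (hg : 0 ≤ᵐ[μ] g)
    (hfi : Integrable f μ) (hgi : Integrable g μ) :
    (∫ a, √(f a * g a) ∂μ) ^ 2 ≤ (∫ a, f a ∂μ) * ∫ a, g a ∂μ := by
  have memLp_sqrt : ∀ {h : α → ℝ}, 0 ≤ᵐ[μ] h → Integrable h μ →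
      MemLp (fun a ↦ √(h a)) (ENNReal.ofReal 2) μ := fun {h} hh hhi ↦ by
    rw [ENNReal.ofReal_ofNat,
      memLp_two_iff_integrable_sq (Real.continuous_sqrt.comp_aestronglyMeasurable hhi.1)]
    refine hhi.congr ?_
    filter_upwards [hh] with a ha using (Real.sq_sqrt ha).symm
  have integral_sqrt_rpow : ∀ {h : α → ℝ}, 0 ≤ᵐ[μ] h →
      (∫ a, √(h a) ^ (2 : ℝ) ∂μ) ^ (1 / 2 : ℝ) = √(∫ a, h a ∂μ) := fun {h} hh ↦ by
    rw [← Real.sqrt_eq_rpow]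
    congr 1
    refine integral_congr_ae ?_
    filter_upwards [hh] with a ha using by rw [Real.rpow_two, Real.sq_sqrt ha]
  have holder := integral_mul_le_Lp_mul_Lq_of_nonneg Real.HolderConjugate.two_two
    (.of_forall fun a ↦ Real.sqrt_nonneg (f a)) (.of_forall fun a ↦ Real.sqrt_nonneg (g a))
    (memLp_sqrt hf hfi) (memLp_sqrt hg hgi)
  rw [integral_sqrt_rpow hf, integral_sqrt_rpow hg] at holder
  have hsplit : ∫ a, √(f a * g a) ∂μ = ∫ a, √(f a) * √(g a) ∂μ := by
    refine integral_congr_ae ?_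
    filter_upwards [hf] with a ha using Real.sqrt_mul ha _
  calc (∫ a, √(f a * g a) ∂μ) ^ 2
      ≤ (√(∫ a, f a ∂μ) * √(∫ a, g a ∂μ)) ^ 2 := by
        rw [hsplit]
        exact pow_le_pow_left₀ (integral_nonneg fun a ↦ by positivity) holder 2
    _ = (∫ a, f a ∂μ) * ∫ a, g a ∂μ := by
        rw [mul_pow, Real.sq_sqrt (integral_nonneg_of_ae hf),
          Real.sq_sqrt (integral_nonneg_of_ae hg)]

theorem sq_integral_sqrt_mul_le_integral_min_mul_integral_max {f g : α → ℝ} (hf : 0 ≤ᵐ[μ] f)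
    (hg : 0 ≤ᵐ[μ] g) (hfi : Integrable f μ) (hgi : Integrable g μ) :
    (∫ a, √(f a * g a) ∂μ) ^ 2 ≤ (∫ a, min (f a) (g a) ∂μ) * ∫ a, max (f a) (g a) ∂μ := by
  simpa only [min_mul_max] using sq_integral_sqrt_mul_le (f := fun a ↦ min (f a) (g a))
    (g := fun a ↦ max (f a) (g a))
    (by filter_upwards [hf, hg] with a ha hb using le_min ha hb)
    (by filter_upwards [hf] with a ha using ha.trans (le_max_left _ _)) (hfi.inf hgi) (hfi.sup hgi)

end

theorem half_sub_half_sqrt_le_of_le_mul_one_sub {x c : ℝ} (h : c ≤ x * (1 - x)) :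
    1 / 2 - 1 / 2 * √(1 - 4 * c) ≤ x := by
  have habs : |1 - 2 * x| ≤ √(1 - 4 * c) := by
    rw [← Real.sqrt_sq_eq_abs]
    exact Real.sqrt_le_sqrt (by nlinarith)
  linarith [le_abs_self (1 - 2 * x)]

theorem bayes_error_ge_half_sub_half_sqrt_general
    {S : Type*} [MeasurableSpace S] (μ : Measure S)
    (p₀ p₁ : S → ℝ)
    (hp₀ : ∀ s, 0 ≤ p₀ s) (hp₁ : ∀ s, 0 ≤ p₁ s)
    (hint₀ : ∫ s, p₀ s ∂μ = 1) (hint₁ : ∫ s, p₁ s ∂μ = 1)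
    (π₀ π₁ : ℝ) (hπ₀ : 0 ≤ π₀) (hπ₁ : 0 ≤ π₁) (hπ : π₀ + π₁ = 1)
    (Pe ρ : ℝ) (hPe : Pe = ∫ s, min (π₀ * p₀ s) (π₁ * p₁ s) ∂μ)
    (hρ : ρ = ∫ s, Real.sqrt (p₀ s * p₁ s) ∂μ) :
    1 / 2 - 1 / 2 * Real.sqrt (1 - 4 * π₀ * π₁ * ρ ^ 2) ≤ Pe := by
  have hi₀ : Integrable (fun s ↦ π₀ * p₀ s) μ :=
    (Integrable.of_integral_ne_zero (by simp [hint₀])).const_mul π₀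
  have hi₁ : Integrable (fun s ↦ π₁ * p₁ s) μ :=
    (Integrable.of_integral_ne_zero (by simp [hint₁])).const_mul π₁
  have hmax : ∫ s, max (π₀ * p₀ s) (π₁ * p₁ s) ∂μ = 1 - Pe := by
    have hsum : ∫ s, (min (π₀ * p₀ s) (π₁ * p₁ s) + max (π₀ * p₀ s) (π₁ * p₁ s)) ∂μ = 1 := by
      simp only [min_add_max]
      rw [integral_add hi₀ hi₁, integral_const_mul, integral_const_mul, hint₀, hint₁]
      linarith
    have hmin_i : Integrable (fun s ↦ min (π₀ * p₀ s) (π₁ * p₁ s)) μ := hi₀.inf hi₁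
    have hmax_i : Integrable (fun s ↦ max (π₀ * p₀ s) (π₁ * p₁ s)) μ := hi₀.sup hi₁
    rw [integral_add hmin_i hmax_i, ← hPe] at hsum
    linarith
  have hbc : ∫ s, √(π₀ * p₀ s * (π₁ * p₁ s)) ∂μ = √(π₀ * π₁) * ρ := by
    rw [hρ, ← integral_const_mul]
    congr with s
    rw [← Real.sqrt_mul (mul_nonneg hπ₀ hπ₁)]
    ring_nf
  rw [show 4 * π₀ * π₁ * ρ ^ 2 = 4 * (π₀ * π₁ * ρ ^ 2) by ring]
  apply half_sub_half_sqrt_le_of_le_mul_one_sub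
  calc π₀ * π₁ * ρ ^ 2 = (∫ s, √(π₀ * p₀ s * (π₁ * p₁ s)) ∂μ) ^ 2 := by
        rw [hbc, mul_pow, Real.sq_sqrt (mul_nonneg hπ₀ hπ₁)]
    _ ≤ _ := sq_integral_sqrt_mul_le_integral_min_mul_integral_max
        (.of_forall fun s ↦ mul_nonneg hπ₀ (hp₀ s)) (.of_forall fun s ↦ mul_nonneg hπ₁ (hp₁ s))
        hi₀ hi₁
    _ = Pe * (1 - Pe) := by rw [← hPe, hmax]

/-- With Bayes error `P_e = ∫ min (π₀ p₀) (π₁ p₁) dμ` and Bhattacharyya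
coefficient `ρ = ∫ √(p₀ p₁) dμ`, one has `P_e ≥ 1/2 − (1/2) √(1 − 4 π₀ π₁ ρ²)`. -/
theorem bayes_error_ge_half_sub_half_sqrt
    {S : Type*} [MeasurableSpace S] (μ : Measure S) [SigmaFinite μ]
    (p₀ p₁ : S → ℝ) (hp₀m : Measurable p₀) (hp₁m : Measurable p₁)
    (hp₀ : ∀ s, 0 ≤ p₀ s) (hp₁ : ∀ s, 0 ≤ p₁ s)
    (hint₀ : ∫ s, p₀ s ∂μ = 1) (hint₁ : ∫ s, p₁ s ∂μ = 1)
    (π₀ π₁ : ℝ) (hπ₀ : 0 ≤ π₀) (hπ₁ : 0 ≤ π₁) (hπ : π₀ + π₁ = 1)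
    (Pe ρ : ℝ) (hPe : Pe = ∫ s, min (π₀ * p₀ s) (π₁ * p₁ s) ∂μ)
    (hρ : ρ = ∫ s, Real.sqrt (p₀ s * p₁ s) ∂μ) :
    1 / 2 - 1 / 2 * Real.sqrt (1 - 4 * π₀ * π₁ * ρ ^ 2) ≤ Pe :=
  bayes_error_ge_half_sub_half_sqrt_general μ p₀ p₁ hp₀ hp₁ hint₀ hint₁ π₀ π₁ hπ₀ hπ₁ hπ Pe ρ hPe hρ
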